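/- arXiv:1912.12041 — 3 statements merged into one kernel-verified Lean document; each statement's English description precedes it below -/
import Mathlib

section
/- Under condition (G1), for every ξ > 0 the function K1 is differentiable at ξ and, with s = s(ξ), its derivative satisfies K1'(ξ) = − K1(ξ) · g'(s) / (ξ·g'(s) + g(s)²) ≤ 0. -/
/-!
The map `F(s) = s·g(s)` is strictly increasing on `[0, ∞)`, since `g` is positive and
nondecreasing there, so `s(·)` is a monotone right inverse of `F` whose image is all of
`(0, ∞)`; a monotone function with such an image is continuous. With `F'(s) = g(s) + s·g'(s) > 0`
the inverse function theorem gives `s'(ξ) = 1 / F'(s)`, and the chain rule applied to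
`K1 = 1 / (g ∘ s)` yields `K1' = -g'(s) / (g(s)² F'(s))`, which is the stated formula after
substituting `ξ = s·g(s)`.
-/

open Set Filter Topology

theorem monotoneOn_Ici_of_hasDerivAt_nonneg {g g' : ℝ → ℝ} {a : ℝ} (hg : ContinuousOn g (Ici a))
    (hderiv : ∀ s, a < s → HasDerivAt g (g' s) s) (hnonneg : ∀ s, a < s → 0 ≤ g' s) :
    MonotoneOn g (Ici a) :=
  monotoneOn_of_hasDerivWithinAt_nonneg (convex_Ici a) hg
    (fun s hs => (hderiv s (by simpa using hs)).hasDerivWithinAt)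
    (fun s hs => hnonneg s (by simpa using hs))

theorem strictMonoOn_id_mul_of_monotoneOn_of_pos {g : ℝ → ℝ} (hmono : MonotoneOn g (Ici 0))
    (hpos : ∀ s, 0 ≤ s → 0 < g s) : StrictMonoOn (fun s => s * g s) (Ici 0) :=
  fun a ha b hb hab =>
    calc a * g a ≤ a * g b := mul_le_mul_of_nonneg_left (hmono ha hb hab.le) ha
      _ < b * g b := mul_lt_mul_of_pos_right hab (hpos b hb)

theorem StrictMonoOn.strictMonoOn_of_rightInvOn {f sol : ℝ → ℝ} {s t : Set ℝ}
    (hf : StrictMonoOn f s) (hmaps : MapsTo sol t s) (hinv : RightInvOn sol f t) :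
    StrictMonoOn sol t := fun x hx y hy hxy =>
  (hf.lt_iff_lt (hmaps hx) (hmaps hy)).mp (by rwa [hinv hx, hinv hy])

theorem StrictMonoOn.continuousAt_of_rightInvOn {f sol : ℝ → ℝ} {s t : Set ℝ} {ξ : ℝ}
    (hf : StrictMonoOn f s) (hmaps : MapsTo sol t s) (hinv : RightInvOn sol f t)
    (ht : t ∈ 𝓝 ξ) (himage : s ∩ f ⁻¹' t ∈ 𝓝 (sol ξ)) : ContinuousAt sol ξ := by
  refine continuousAt_of_monotoneOn_of_image_mem_nhds
    (hf.strictMonoOn_of_rightInvOn hmaps hinv).monotoneOn ht (mem_of_superset himage ?_)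
  rintro u ⟨hu, hfu⟩
  exact ⟨f u, hfu, hf.injOn (hmaps hfu) hu (hinv hfu)⟩

section IdMulRightInverse

variable {g sol : ℝ → ℝ}

theorem apply_pos_of_id_mul_rightInv (hsol : ∀ ξ, 0 ≤ ξ → 0 ≤ sol ξ ∧ sol ξ * g (sol ξ) = ξ)
    {ξ : ℝ} (hξ : 0 < ξ) : 0 < sol ξ :=
  (hsol ξ hξ.le).1.lt_of_ne fun h => hξ.ne (by rw [← (hsol ξ hξ.le).2, ← h, zero_mul])

theorem continuousAt_of_id_mul_rightInv (hmono : MonotoneOn g (Ici 0))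
    (hpos : ∀ s, 0 ≤ s → 0 < g s) (hsol : ∀ ξ, 0 ≤ ξ → 0 ≤ sol ξ ∧ sol ξ * g (sol ξ) = ξ)
    {ξ : ℝ} (hξ : 0 < ξ) : ContinuousAt sol ξ :=
  (strictMonoOn_id_mul_of_monotoneOn_of_pos hmono hpos).continuousAt_of_rightInvOn (t := Ioi 0)
    (fun x (hx : 0 < x) => (hsol x hx.le).1) (fun x (hx : 0 < x) => (hsol x hx.le).2)
    (Ioi_mem_nhds hξ)
    (mem_of_superset (Ioi_mem_nhds (apply_pos_of_id_mul_rightInv hsol hξ))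
      fun u (hu : 0 < u) => ⟨hu.le, mul_pos hu (hpos u hu.le)⟩)

theorem HasDerivAt.hasDerivAt_of_id_mul_rightInv {g' ξ : ℝ} (hg : HasDerivAt g g' (sol ξ))
    (hne : g (sol ξ) + sol ξ * g' ≠ 0) (hcont : ContinuousAt sol ξ)
    (hsol : ∀ᶠ y in 𝓝 ξ, sol y * g (sol y) = y) :
    HasDerivAt sol (g (sol ξ) + sol ξ * g')⁻¹ ξ := by
  have hF : HasDerivAt (fun t => t * g t) (g (sol ξ) + sol ξ * g') (sol ξ) := by
    simpa only [one_mul] using (hasDerivAt_id' (sol ξ)).fun_mul hg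
  exact hF.of_local_left_inverse hcont hne hsol

end IdMulRightInverse

theorem neg_mul_inv_div_sq_eq {G G' s ξ : ℝ} (hG : G ≠ 0) (hξ : s * G = ξ) :
    -(G' * (G + s * G')⁻¹) / G ^ 2 = -(1 / G) * G' / (ξ * G' + G ^ 2) := by
  subst hξ
  field_simp
  ring

theorem K1_hasDerivAt_general
    (g g' sol K1 : ℝ → ℝ)
    -- condition (G1)
    (hg_cont : ContinuousOn g (Set.Ici 0))
    (hg_deriv : ∀ s, 0 < s → HasDerivAt g (g' s) s)
    (hg'_nonneg : ∀ s, 0 < s → 0 ≤ g' s)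
    (hg0 : 0 < g 0)
    -- the implicit function s(ξ): the unique nonnegative solution of s·g(s) = ξ
    (hsol : ∀ ξ, 0 ≤ ξ → (0 ≤ sol ξ ∧ sol ξ * g (sol ξ) = ξ))
    -- the Forchheimer coefficient
    (hK1 : ∀ ξ, 0 ≤ ξ → K1 ξ = 1 / g (sol ξ)) :
    ∀ ξ, 0 < ξ →
      HasDerivAt K1 (-(K1 ξ) * g' (sol ξ) / (ξ * g' (sol ξ) + (g (sol ξ)) ^ 2)) ξ ∧
      -(K1 ξ) * g' (sol ξ) / (ξ * g' (sol ξ) + (g (sol ξ)) ^ 2) ≤ 0 := by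
  intro ξ hξ
  have hmono := monotoneOn_Ici_of_hasDerivAt_nonneg hg_cont hg_deriv hg'_nonneg
  have hpos : ∀ s, 0 ≤ s → 0 < g s := fun s hs => hg0.trans_le (hmono self_mem_Ici hs hs)
  have hs : 0 < sol ξ := apply_pos_of_id_mul_rightInv hsol hξ
  have hgs : 0 < g (sol ξ) := hpos _ hs.le
  have hg's : 0 ≤ g' (sol ξ) := hg'_nonneg _ hs
  have hF_pos : 0 < g (sol ξ) + sol ξ * g' (sol ξ) := by positivity
  have hsol_deriv := (hg_deriv _ hs).hasDerivAt_of_id_mul_rightInv hF_pos.ne'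
    (continuousAt_of_id_mul_rightInv hmono hpos hsol hξ)
    ((eventually_gt_nhds hξ).mono fun y hy => (hsol y hy.le).2)
  have hK1_deriv := (((hg_deriv _ hs).comp ξ hsol_deriv).inv hgs.ne').congr_of_eventuallyEq
    ((eventually_gt_nhds hξ).mono fun y (hy : 0 < y) => (hK1 y hy.le).trans (one_div _))
  rw [hK1 ξ hξ.le, ← neg_mul_inv_div_sq_eq hgs.ne' (hsol ξ hξ.le).2]
  exact ⟨hK1_deriv, div_nonpos_of_nonpos_of_nonneg (neg_nonpos.mpr (by positivity)) (by positivity)⟩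

/-- Under condition (G1), the derivative formula for the Forchheimer coefficient:
for every `ξ > 0`, with `s = s(ξ)`,
`K1'(ξ) = − K1(ξ)·g'(s) / (ξ·g'(s) + g(s)²) ≤ 0` (Lemma III.2 of Aulisa et al.). -/
theorem K1_hasDerivAt
    (g g' sol K1 : ℝ → ℝ)
    -- condition (G1)
    (hg_cont : ContinuousOn g (Set.Ici 0))
    (hg_deriv : ∀ s, 0 < s → HasDerivAt g (g' s) s)
    (hg'_cont : ContinuousOn g' (Set.Ioi 0))
    (hg'_nonneg : ∀ s, 0 < s → 0 ≤ g' s)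
    (hg0 : 0 < g 0)
    -- the implicit function s(ξ): the unique nonnegative solution of s·g(s) = ξ
    (hsol : ∀ ξ, 0 ≤ ξ → (0 ≤ sol ξ ∧ sol ξ * g (sol ξ) = ξ))
    -- the Forchheimer coefficient
    (hK1 : ∀ ξ, 0 ≤ ξ → K1 ξ = 1 / g (sol ξ)) :
    ∀ ξ, 0 < ξ →
      HasDerivAt K1 (-(K1 ξ) * g' (sol ξ) / (ξ * g' (sol ξ) + (g (sol ξ)) ^ 2)) ξ ∧
      -(K1 ξ) * g' (sol ξ) / (ξ * g' (sol ξ) + (g (sol ξ)) ^ 2) ≤ 0 :=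
  K1_hasDerivAt_general g g' sol K1 hg_cont hg_deriv hg'_nonneg hg0 hsol hK1
end

section
/- Under condition (G1), the map F : ℝ^d → ℝ^d defined by F(y) = K1(|y|)·y is monotone; equivalently, Φ(y,y') ≥ 0 for all y, y' ∈ ℝ^d. -/
/-!
Writing `F(y) = k(|y|) y` with `k = K1 ≥ 0`, the Cauchy–Schwarz inequality gives
`Φ(y, y') ≥ (|y'| - |y|) (k(|y'|) |y'| - k(|y|) |y|)`, so it suffices that `t ↦ k(t) t` is
nondecreasing. Here `K1(ξ) ξ = s(ξ)`, and `s` is nondecreasing as a right inverse of the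
nondecreasing map `s ↦ s g(s)`.
-/

open Set
open scoped RealInnerProductSpace

theorem monotoneOn_Ici_of_hasDerivAt_nonneg_s8 {f f' : ℝ → ℝ} {a : ℝ}
    (hf : ContinuousOn f (Ici a))
    (hf' : ∀ x, a < x → HasDerivAt f (f' x) x) (hf'₀ : ∀ x, a < x → 0 ≤ f' x) :
    MonotoneOn f (Ici a) :=
  monotoneOn_of_hasDerivWithinAt_nonneg (convex_Ici a) hf
    (fun x hx => by rw [interior_Ici] at hx ⊢; exact (hf' x hx).hasDerivWithinAt)
    (fun x hx => by rw [interior_Ici] at hx; exact hf'₀ x hx)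

theorem inner_smul_sub_smul_nonneg_of_monotoneOn {E : Type*} [NormedAddCommGroup E]
    [InnerProductSpace ℝ E] {k : ℝ → ℝ} (hk : ∀ t, 0 ≤ t → 0 ≤ k t)
    (hmono : MonotoneOn (fun t => k t * t) (Ici 0)) (y y' : E) :
    0 ≤ ⟪k ‖y'‖ • y' - k ‖y‖ • y, y' - y⟫ := by
  set a := ‖y‖
  set b := ‖y'‖
  have ha : 0 ≤ a := norm_nonneg y
  have hb : 0 ≤ b := norm_nonneg y'
  have hexpand : ⟪k b • y' - k a • y, y' - y⟫ =
      k b * b ^ 2 - (k b + k a) * ⟪y, y'⟫ + k a * a ^ 2 := by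
    simp only [inner_sub_left, inner_sub_right, real_inner_smul_left,
      real_inner_self_eq_norm_sq, real_inner_comm y' y]
    ring
  have hcs : (k b + k a) * ⟪y, y'⟫ ≤ (k b + k a) * (a * b) :=
    mul_le_mul_of_nonneg_left (real_inner_le_norm y y') (add_nonneg (hk b hb) (hk a ha))
  have hmonovary : 0 ≤ (k b * b - k a * a) * (b - a) :=
    (hmono.monovaryOn monotoneOn_id).sub_mul_sub_nonneg ha hb
  rw [hexpand]
  linarith

theorem forchheimer_map_monotone_general
    (d : ℕ)
    (g g' sol K1 : ℝ → ℝ)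
    -- condition (G1)
    (hg_cont : ContinuousOn g (Set.Ici 0))
    (hg_deriv : ∀ s, 0 < s → HasDerivAt g (g' s) s)
    (hg'_nonneg : ∀ s, 0 < s → 0 ≤ g' s)
    (hg0 : 0 < g 0)
    -- the implicit function s(ξ): the unique nonnegative solution of s·g(s) = ξ
    (hsol : ∀ ξ, 0 ≤ ξ → (0 ≤ sol ξ ∧ sol ξ * g (sol ξ) = ξ))
    -- the Forchheimer coefficient
    (hK1 : ∀ ξ, 0 ≤ ξ → K1 ξ = 1 / g (sol ξ)) :
    ∀ y y' : EuclideanSpace ℝ (Fin d),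
      0 ≤ (inner ℝ (K1 ‖y'‖ • y' - K1 ‖y‖ • y) (y' - y) : ℝ) := by
  have hg_mono : MonotoneOn g (Ici 0) :=
    monotoneOn_Ici_of_hasDerivAt_nonneg_s8 hg_cont hg_deriv hg'_nonneg
  have hg_pos : ∀ s ∈ Ici (0 : ℝ), 0 < g s := fun s hs =>
    hg0.trans_le (hg_mono self_mem_Ici hs hs)
  have hsol_mono : MonotoneOn sol (Ici 0) :=
    Function.monotoneOn_of_rightInvOn_of_mapsTo
      (monotoneOn_id.mul hg_mono (fun _ hs => hs) fun s hs => (hg_pos s hs).le)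
      (fun ξ hξ => (hsol ξ hξ).2) fun ξ hξ => (hsol ξ hξ).1
  have hK1_mul : EqOn sol (fun ξ => K1 ξ * ξ) (Ici 0) := fun ξ hξ => by
    show sol ξ = K1 ξ * ξ
    rw [hK1 ξ hξ, one_div_mul_eq_div, eq_div_iff (hg_pos _ (hsol ξ hξ).1).ne', (hsol ξ hξ).2]
  have hK1_nonneg : ∀ ξ, 0 ≤ ξ → 0 ≤ K1 ξ := fun ξ hξ => by
    rw [hK1 ξ hξ]
    exact one_div_nonneg.2 (hg_pos _ (hsol ξ hξ).1).le
  exact inner_smul_sub_smul_nonneg_of_monotoneOn hK1_nonneg (hsol_mono.congr hK1_mul)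

/-- Under condition (G1), the map `F(y) = K1(|y|)·y` is monotone on `ℝ^d`;
equivalently `Φ(y,y') = (K1(|y'|)y' − K1(|y|)y)·(y'−y) ≥ 0`
(Proposition III.4 of Aulisa et al.). -/
theorem forchheimer_map_monotone
    (d : ℕ) (hd : 1 ≤ d)
    (g g' sol K1 : ℝ → ℝ)
    -- condition (G1)
    (hg_cont : ContinuousOn g (Set.Ici 0))
    (hg_deriv : ∀ s, 0 < s → HasDerivAt g (g' s) s)
    (hg'_cont : ContinuousOn g' (Set.Ioi 0))
    (hg'_nonneg : ∀ s, 0 < s → 0 ≤ g' s)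
    (hg0 : 0 < g 0)
    -- the implicit function s(ξ): the unique nonnegative solution of s·g(s) = ξ
    (hsol : ∀ ξ, 0 ≤ ξ → (0 ≤ sol ξ ∧ sol ξ * g (sol ξ) = ξ))
    -- the Forchheimer coefficient
    (hK1 : ∀ ξ, 0 ≤ ξ → K1 ξ = 1 / g (sol ξ)) :
    ∀ y y' : EuclideanSpace ℝ (Fin d),
      0 ≤ (inner ℝ (K1 ‖y'‖ • y' - K1 ‖y‖ • y) (y' - y) : ℝ) :=
  forchheimer_map_monotone_general d g g' sol K1 hg_cont hg_deriv hg'_nonneg hg0 hsol hK1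
end

section
/- Let a ∈ (0,1), d₁, d₂ > 0, and let K1 : [0,∞) → ℝ be continuous with d₁(1+ξ)^{−a} ≤ K1(ξ) ≤ d₂(1+ξ)^{−a} for all ξ ≥ 0. Define H(ξ) = ∫₀^{ξ²} K1(√s) ds for ξ ≥ 0. Then there exists a constant d₃ > 0 such that d₃(ξ^{2−a} − 1) ≤ H(ξ) ≤ 2 d₂ ξ^{2−a} for all ξ ≥ 0. -/
open MeasureTheory

lemma Hgb_int_rpow (r : ℝ) (hr : -1 < r) (b : ℝ) (hb : 0 ≤ b) :
    ∫ s in Set.Ioc (0:ℝ) b, s ^ r = b ^ (r+1) / (r+1) := by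
  rw [← intervalIntegral.integral_of_le hb, integral_rpow (Or.inl hr),
    Real.zero_rpow (by linarith)]
  ring

lemma Hgb_int_rpow_shift (r : ℝ) (hr : -1 < r) (b : ℝ) (hb : 0 ≤ b) :
    ∫ s in Set.Ioc (0:ℝ) b, (1+s) ^ r = ((1+b) ^ (r+1) - 1) / (r+1) := by
  rw [← intervalIntegral.integral_of_le hb,
    show (fun s : ℝ => (1+s)^r) = (fun s : ℝ => ((fun x : ℝ => x ^ r) (1 + s))) from rfl,
    intervalIntegral.integral_comp_add_left (fun x : ℝ => x ^ r) 1,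
    integral_rpow (Or.inl hr)]
  norm_num

/-- Two-sided growth estimate (3.17) for the potential
`H(ξ) = ∫₀^{ξ²} K1(√s) ds` associated with the Forchheimer coefficient `K1`,
deduced from the degeneracy bound (2.20). -/
theorem H_growth_bound
    (a d₁ d₂ : ℝ) (K1 : ℝ → ℝ)
    (ha0 : 0 < a) (ha1 : a < 1) (hd₁ : 0 < d₁) (hd₂ : 0 < d₂)
    (hK1_cont : ContinuousOn K1 (Set.Ici 0))
    (hK1 : ∀ ξ : ℝ, 0 ≤ ξ →
      d₁ * (1 + ξ) ^ (-a) ≤ K1 ξ ∧ K1 ξ ≤ d₂ * (1 + ξ) ^ (-a))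
    (H : ℝ → ℝ)
    (hH : ∀ ξ : ℝ, 0 ≤ ξ → H ξ = ∫ s in Set.Icc (0 : ℝ) (ξ ^ 2), K1 (Real.sqrt s)) :
    ∃ d₃ : ℝ, 0 < d₃ ∧ ∀ ξ : ℝ, 0 ≤ ξ →
      d₃ * (ξ ^ (2 - a) - 1) ≤ H ξ ∧ H ξ ≤ 2 * d₂ * ξ ^ (2 - a) := by
  have hr : (-1:ℝ) < -(a/2) := by linarith
  have he : 0 < 1 - a/2 := by linarith
  have he1 : 1 - a/2 ≤ 1 := by linarith
  set c : ℝ := d₁ * 2 ^ (-(a/2)) with hc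
  have hcpos : 0 < c := mul_pos hd₁ (Real.rpow_pos_of_pos two_pos _)
  refine ⟨c, hcpos, fun ξ hξ => ?_⟩
  set b : ℝ := ξ ^ 2 with hbdef
  have hb : 0 ≤ b := sq_nonneg ξ
  -- rewrite H as integral over Ioc
  have hHeq : H ξ = ∫ s in Set.Ioc (0:ℝ) b, K1 (Real.sqrt s) := by
    rw [hH ξ hξ, ← hbdef, integral_Icc_eq_integral_Ioc]
  -- integrability of the integrand
  have hgcont : ContinuousOn (fun s => K1 (Real.sqrt s)) (Set.Icc (0:ℝ) b) :=
    hK1_cont.comp Real.continuous_sqrt.continuousOn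
      (fun s _ => Real.sqrt_nonneg s)
  have hgint : IntegrableOn (fun s => K1 (Real.sqrt s)) (Set.Ioc (0:ℝ) b) :=
    (hgcont.integrableOn_Icc).mono_set Set.Ioc_subset_Icc_self
  -- (ξ²)^(1-a/2) = ξ^(2-a)
  have hxipow : b ^ (1 - a/2) = ξ ^ (2 - a) := by
    rw [hbdef, ← Real.rpow_natCast ξ 2, ← Real.rpow_mul hξ]
    norm_num
    ring_nf
  constructor
  · -- lower bound
    have hptlow : ∀ s ∈ Set.Ioc (0:ℝ) b,
        c * (1+s) ^ (-(a/2)) ≤ K1 (Real.sqrt s) := by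
      intro s hs
      have hs0 : 0 ≤ s := le_of_lt hs.1
      have hsq : 0 ≤ Real.sqrt s := Real.sqrt_nonneg s
      refine le_trans ?_ ((hK1 _ hsq).1)
      have h2 : (1 + Real.sqrt s) ≤ Real.sqrt 2 * Real.sqrt (1 + s) := by
        rw [← Real.sqrt_mul (by norm_num : (0:ℝ) ≤ 2)]
        have h3 : (1 + Real.sqrt s)^2 ≤ 2 * (1 + s) := by
          have := Real.sq_sqrt hs0
          nlinarith [sq_nonneg (Real.sqrt s - 1)]
        calc 1 + Real.sqrt s = Real.sqrt ((1 + Real.sqrt s)^2) := by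
              rw [Real.sqrt_sq (by linarith)]
          _ ≤ Real.sqrt (2 * (1 + s)) := Real.sqrt_le_sqrt h3
      have h4 : (Real.sqrt 2 * Real.sqrt (1+s)) ^ (-a) ≤ (1 + Real.sqrt s) ^ (-a) :=
        Real.rpow_le_rpow_of_nonpos (by positivity) h2 (by linarith)
      refine le_trans (le_of_eq ?_) (mul_le_mul_of_nonneg_left h4 hd₁.le)
      rw [hc, Real.mul_rpow (Real.sqrt_nonneg 2) (Real.sqrt_nonneg _)]
      rw [Real.sqrt_eq_rpow, Real.sqrt_eq_rpow,
        ← Real.rpow_mul (by norm_num : (0:ℝ) ≤ 2),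
        ← Real.rpow_mul (by linarith : (0:ℝ) ≤ 1 + s)]
      ring_nf
    have hflow : IntegrableOn (fun s => c * (1+s) ^ (-(a/2))) (Set.Ioc (0:ℝ) b) := by
      apply Integrable.const_mul
      have hco : ContinuousOn (fun s : ℝ => (1+s) ^ (-(a/2))) (Set.Icc 0 b) := by
        apply ContinuousOn.rpow_const
        · exact (continuous_const.add continuous_id).continuousOn
        · intro s hs; left; linarith [hs.1]
      exact hco.integrableOn_Icc.mono_set Set.Ioc_subset_Icc_self
    have hmono := setIntegral_mono_on hflow hgint measurableSet_Ioc hptlow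
    rw [integral_const_mul, Hgb_int_rpow_shift _ hr _ hb] at hmono
    rw [hHeq]
    refine le_trans ?_ hmono
    have hone : (1:ℝ) ≤ (1+b) ^ (-(a/2)+1) :=
      Real.one_le_rpow (by linarith) (by linarith)
    have hge : ξ ^ (2-a) ≤ (1+b) ^ (-(a/2)+1) := by
      rw [← hxipow, show -(a/2)+1 = 1 - a/2 by ring]
      exact Real.rpow_le_rpow hb (by linarith) he.le
    rcases le_or_gt (ξ ^ (2-a)) 1 with h | h
    · have : 0 ≤ ((1+b) ^ (-(a/2)+1) - 1) / (-(a/2)+1) := by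
        apply div_nonneg (by linarith) (by linarith)
      nlinarith
    · have h1 : ξ ^ (2-a) - 1 ≤ ((1+b) ^ (-(a/2)+1) - 1) / (-(a/2)+1) := by
        rw [le_div_iff₀ (by linarith)]
        nlinarith
      nlinarith
  · -- upper bound
    have hpthigh : ∀ s ∈ Set.Ioc (0:ℝ) b,
        K1 (Real.sqrt s) ≤ d₂ * s ^ (-(a/2)) := by
      intro s hs
      have hs0 : 0 < s := hs.1
      have hsq : 0 < Real.sqrt s := Real.sqrt_pos.mpr hs0
      refine le_trans ((hK1 _ hsq.le).2) ?_
      have h4 : (1 + Real.sqrt s) ^ (-a) ≤ (Real.sqrt s) ^ (-a) :=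
        Real.rpow_le_rpow_of_nonpos hsq (by linarith) (by linarith)
      refine le_trans (mul_le_mul_of_nonneg_left h4 hd₂.le) (le_of_eq ?_)
      rw [Real.sqrt_eq_rpow, ← Real.rpow_mul hs0.le]
      ring_nf
    have hfhigh : IntegrableOn (fun s => d₂ * s ^ (-(a/2))) (Set.Ioc (0:ℝ) b) := by
      apply Integrable.const_mul
      exact (intervalIntegrable_iff_integrableOn_Ioc_of_le hb).mp
        (intervalIntegral.intervalIntegrable_rpow' hr)
    have hmono := setIntegral_mono_on hgint hfhigh measurableSet_Ioc hpthigh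
    rw [integral_const_mul, Hgb_int_rpow _ hr _ hb] at hmono
    rw [hHeq]
    refine le_trans hmono ?_
    rw [show -(a/2)+1 = 1 - a/2 by ring, hxipow]
    have hx2 : 0 ≤ ξ ^ (2-a) := Real.rpow_nonneg hξ _
    have h5 : ξ ^ (2-a) / (1 - a/2) ≤ 2 * ξ ^ (2-a) := by
      rw [div_le_iff₀ (by linarith)]
      nlinarith
    nlinarith
end
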